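/- In the integral quandle ring of the dihedral quandle R_n with n odd, for the fixed basepoint a_0 and e_i = a_i - a_0, each generator e_i satisfies e_i·e_j ∈ Δ²(R_n), and Δ(R_n)/Δ²(R_n) is cyclic of order n. -/

import Mathlib

/-- Dihedral quandle operation on `ZMod n`: `a · b = 2b - a`. -/
def dq (n : ℕ) (a b : ZMod n) : ZMod n := 2 * b - a

/-- Quandle ring multiplication on `ℤ[R_n] = ZMod n →₀ ℤ`. -/
noncomputable def qmul (n : ℕ) (x y : ZMod n →₀ ℤ) : ZMod n →₀ ℤ :=
  x.sum fun a r => y.sum fun b s => Finsupp.single (dq n a b) (r * s)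

/-- Augmentation map. -/
noncomputable def aug (n : ℕ) : (ZMod n →₀ ℤ) →ₗ[ℤ] ℤ :=
  Finsupp.lsum ℤ fun _ => LinearMap.id

/-- `e i = a_i - a_0`. -/
noncomputable def e (n : ℕ) (i : ZMod n) : ZMod n →₀ ℤ :=
  Finsupp.single i 1 - Finsupp.single 0 1

/-- Augmentation ideal. -/
noncomputable def Δ (n : ℕ) : Submodule ℤ (ZMod n →₀ ℤ) := LinearMap.ker (aug n)

noncomputable def Δ2 (n : ℕ) : Submodule ℤ (ZMod n →₀ ℤ) :=
  Submodule.span ℤ {z | ∃ x ∈ Δ n, ∃ y ∈ Δ n, z = qmul n x y}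

noncomputable def Δ3 (n : ℕ) : Submodule ℤ (ZMod n →₀ ℤ) :=
  Submodule.span ℤ {z | ∃ x ∈ Δ2 n, ∃ y ∈ Δ n, z = qmul n x y}

/-!
The `ℤ`-linear map `moment : ∑ r_a a ↦ ∑ r_a a ∈ ZMod n` satisfies
`moment (x · y) = 2 ε(x) moment(y) - moment(x) ε(y)` (`ε` the augmentation), so it kills `Δ²`,
and it maps `Δ` onto `ZMod n` since `moment e_i = i`. Conversely
`e_{-a} · e_j = e_{2j + a} - e_{2j} - e_a`, and `2` is invertible mod `n`, so `i ↦ e_i` is additive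
modulo `Δ²`. Comparing both sides on basis vectors gives `x ≡ e_{moment x} + ε(x) a_0` modulo `Δ²`
for every `x` (reading `e_•` additively), whence `Δ ∩ ker moment = Δ²`.
-/

open Finsupp

section

variable {n : ℕ}

lemma aug_single (a : ZMod n) (r : ℤ) : aug n (single a r) = r := by
  simp [aug]

lemma aug_e (i : ZMod n) : aug n (e n i) = 0 := by
  simp [e, aug_single]

lemma e_mem_Δ (i : ZMod n) : e n i ∈ Δ n := aug_e i

lemma intCast_aug (x : ZMod n →₀ ℤ) : ((aug n x : ℤ) : ZMod n) = x.sum fun _ r => (r : ZMod n) :=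
  map_finsuppSum (Int.castRingHom (ZMod n)) x _

lemma qmul_single_single (a b : ZMod n) (r s : ℤ) :
    qmul n (single a r) (single b s) = single (dq n a b) (r * s) := by
  simp [qmul]

lemma qmul_sub_left (x₁ x₂ y : ZMod n →₀ ℤ) :
    qmul n (x₁ - x₂) y = qmul n x₁ y - qmul n x₂ y :=
  sum_sub_index fun _ _ _ => by simp only [sub_mul, single_sub, sum_sub]

lemma qmul_sub_right (x y₁ y₂ : ZMod n →₀ ℤ) :
    qmul n x (y₁ - y₂) = qmul n x y₁ - qmul n x y₂ := by
  simp only [qmul]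
  rw [← sum_sub]
  refine sum_congr fun _ _ => sum_sub_index fun _ _ _ => by rw [mul_sub, single_sub]

lemma qmul_e_e (i j : ZMod n) :
    qmul n (e n i) (e n j) = e n (2 * j - i) - e n (2 * j) - e n (-i) := by
  simp only [e, qmul_sub_left, qmul_sub_right, qmul_single_single, dq]
  simp only [mul_zero, zero_sub, sub_zero, mul_one]
  abel

noncomputable def moment (n : ℕ) : (ZMod n →₀ ℤ) →ₗ[ℤ] ZMod n :=
  lsum ℤ fun a => LinearMap.toSpanSingleton ℤ (ZMod n) a

lemma moment_single (a : ZMod n) (r : ℤ) : moment n (single a r) = r * a := by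
  simp [moment, zsmul_eq_mul]

lemma moment_apply (x : ZMod n →₀ ℤ) : moment n x = x.sum fun a r => (r : ZMod n) * a := by
  conv_lhs => rw [← sum_single x, map_finsuppSum]
  exact sum_congr fun a _ => moment_single a _

lemma moment_e (i : ZMod n) : moment n (e n i) = i := by
  simp [e, moment_single]

lemma moment_qmul (x y : ZMod n →₀ ℤ) :
    moment n (qmul n x y) = 2 * aug n x * moment n y - moment n x * aug n y := by
  simp only [qmul, map_finsuppSum, moment_single, dq]
  rw [mul_assoc, intCast_aug, intCast_aug, moment_apply, moment_apply]
  simp only [Finsupp.sum]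
  rw [Finset.sum_mul_sum, Finset.sum_mul_sum, Finset.mul_sum, ← Finset.sum_sub_distrib]
  refine Finset.sum_congr rfl fun a _ => ?_
  rw [Finset.mul_sum, ← Finset.sum_sub_distrib]
  refine Finset.sum_congr rfl fun b _ => ?_
  push_cast
  ring

lemma qmul_mem_Δ2 {x y : ZMod n →₀ ℤ} (hx : x ∈ Δ n) (hy : y ∈ Δ n) : qmul n x y ∈ Δ2 n :=
  Submodule.subset_span ⟨x, hx, y, hy, rfl⟩

lemma Δ2_le_ker_moment (n : ℕ) : Δ2 n ≤ LinearMap.ker (moment n) := by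
  rw [Δ2, Submodule.span_le]
  rintro _ ⟨x, hx, y, hy, rfl⟩
  have hx : aug n x = 0 := hx
  have hy : aug n y = 0 := hy
  simp [moment_qmul, hx, hy]

lemma e_add_sub_mem_Δ2 (h2 : IsUnit (2 : ZMod n)) (a b : ZMod n) :
    e n (a + b) - e n a - e n b ∈ Δ2 n := by
  obtain ⟨j, rfl⟩ : ∃ j, 2 * j = b := ⟨h2.unit⁻¹ * b, by rw [← mul_assoc, h2.mul_val_inv, one_mul]⟩
  have h := qmul_mem_Δ2 (e_mem_Δ (-a)) (e_mem_Δ j)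
  rwa [qmul_e_e, neg_neg, sub_neg_eq_add, add_comm, sub_right_comm] at h

noncomputable def eModΔ2 (h2 : IsUnit (2 : ZMod n)) : ZMod n →+ (ZMod n →₀ ℤ) ⧸ Δ2 n :=
  AddMonoidHom.mk' (fun i => (Δ2 n).mkQ (e n i)) fun a b => by
    rw [← sub_eq_zero, ← map_add, ← map_sub, Submodule.mkQ_apply,
      Submodule.Quotient.mk_eq_zero, ← sub_sub]
    exact e_add_sub_mem_Δ2 h2 a b

lemma mkQ_Δ2_eq (h2 : IsUnit (2 : ZMod n)) (x : ZMod n →₀ ℤ) :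
    (Δ2 n).mkQ x = eModΔ2 h2 (moment n x) + aug n x • (Δ2 n).mkQ (single 0 1) := by
  have key : (Δ2 n).mkQ = (eModΔ2 h2).toIntLinearMap ∘ₗ moment n +
      LinearMap.smulRight (aug n) ((Δ2 n).mkQ (single 0 1)) := by
    refine lhom_ext fun a r => ?_
    rw [LinearMap.add_apply, LinearMap.comp_apply, AddMonoidHom.coe_toIntLinearMap, moment_single,
      ← zsmul_eq_mul, map_zsmul, LinearMap.smulRight_apply, aug_single]
    change _ = r • (Δ2 n).mkQ (e n a) + _
    rw [← smul_add, e, map_sub, sub_add_cancel, ← map_zsmul, smul_single_one]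
  exact LinearMap.congr_fun key x

lemma mem_Δ2_of_moment_eq_zero (h2 : IsUnit (2 : ZMod n)) {x : ZMod n →₀ ℤ} (hx : x ∈ Δ n)
    (h : moment n x = 0) : x ∈ Δ2 n := by
  have hx : aug n x = 0 := hx
  rw [← Submodule.Quotient.mk_eq_zero, ← Submodule.mkQ_apply, mkQ_Δ2_eq h2, h, hx, map_zero,
    zero_smul, add_zero]

end

theorem stmt_17_general (n : ℕ) (hn : Odd n) :
    (∀ i j : ZMod n, qmul n (e n i) (e n j) ∈ Δ2 n) ∧
    Nonempty (((Δ n) ⧸ (Δ2 n).comap (Δ n).subtype) ≃ₗ[ℤ] ZMod n) := by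
  refine ⟨fun i j => qmul_mem_Δ2 (e_mem_Δ i) (e_mem_Δ j), ?_⟩
  have h2 : IsUnit (2 : ZMod n) := by
    exact_mod_cast (ZMod.isUnit_iff_coprime 2 n).2 (Nat.coprime_two_left.2 hn)
  let ψ := moment n ∘ₗ (Δ n).subtype
  have hψ : Function.Surjective ψ := fun i => ⟨⟨e n i, e_mem_Δ i⟩, moment_e i⟩
  have hker : LinearMap.ker ψ = (Δ2 n).comap (Δ n).subtype := by
    ext ⟨x, hx⟩
    exact ⟨mem_Δ2_of_moment_eq_zero h2 hx, fun h => Δ2_le_ker_moment n h⟩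
  exact ⟨(Submodule.quotEquivOfEq _ _ hker.symm).trans (ψ.quotKerEquivOfSurjective hψ)⟩

/-- For odd `n > 1`: every product `e_i · e_j` lies in `Δ²(R_n)`, and
`Δ(R_n)/Δ²(R_n)` is cyclic of order `n`. -/
theorem stmt_17 (n : ℕ) (hn : Odd n) (hn1 : 1 < n) :
    (∀ i j : ZMod n, qmul n (e n i) (e n j) ∈ Δ2 n) ∧
    Nonempty (((Δ n) ⧸ (Δ2 n).comap (Δ n).subtype) ≃ₗ[ℤ] ZMod n) :=
  stmt_17_general n hn
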